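/- arXiv:2209.14766 — 4 statements merged into one kernel-verified Lean document; each statement's English description precedes it below -/
import Mathlib

section
/- If U and V are independent random variables where U is Gamma(N_R, 1)-distributed and V is Gamma(N_T, 1)-distributed (with N_T, N_R positive integers), then the product X = U·V has probability density f_X(x) = 2 x^{(N_T+N_R)/2 − 1} K_τ(2√x) / (Γ(N_T)Γ(N_R)) for x > 0, where τ = |N_T − N_R| and K_τ is the modified Bessel function of the second kind of order τ. -/
/-!
Conditioning on `U`, the product `UV` has density `x ↦ ∫ p_U(u) p_V(x/u) |u|⁻¹ du`. For gamma
densities the integrand is `x^(N_T-1) u^(N_R-N_T-1) e^(-(u + x/u)) / (Γ(N_T)Γ(N_R))` on `u > 0`,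
and the substitution `u = √x eᵗ` turns `∫₀^∞ u^(ν-1) e^(-(u + x/u)) du` into
`x^(ν/2) ∫_ℝ e^(νt - 2√x cosh t) dt = 2 x^(ν/2) K_ν(2√x)`; finally `K_ν = K_|ν|`.
-/

open MeasureTheory ProbabilityTheory

/-- The modified Bessel function of the second kind, via its standard integral
representation `K_ν(x) = ∫₀^∞ exp(-x cosh t) cosh(ν t) dt` (valid for `x > 0`). -/
noncomputable def besselK (ν x : ℝ) : ℝ :=
  ∫ t in Set.Ioi (0 : ℝ), Real.exp (-x * Real.cosh t) * Real.cosh (ν * t)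

open Real Set
open scoped ENNReal

lemma sq_div_four_le_cosh (t : ℝ) : t ^ 2 / 4 ≤ cosh t := by
  have h := quadratic_le_exp_of_nonneg (abs_nonneg t)
  rw [← cosh_abs, cosh_eq]
  nlinarith [exp_pos (-|t|), sq_abs t, abs_nonneg t]

lemma mul_sub_mul_cosh_le (ν : ℝ) {c : ℝ} (hc : 0 < c) (t : ℝ) :
    ν * t - c * cosh t ≤ 2 * ν ^ 2 / c + -(c / 8) * t ^ 2 := by
  have hcosh := mul_le_mul_of_nonneg_left (sq_div_four_le_cosh t) hc.le
  have hamgm : ν * t ≤ 2 * ν ^ 2 / c + c / 8 * t ^ 2 := by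
    have hsq : 2 * ν ^ 2 / c + c / 8 * t ^ 2 - ν * t = 2 / c * (ν - c / 4 * t) ^ 2 := by
      field_simp; ring
    nlinarith [div_nonneg zero_le_two hc.le, sq_nonneg (ν - c / 4 * t)]
  linarith

lemma integrable_exp_mul_sub_mul_cosh (ν : ℝ) {c : ℝ} (hc : 0 < c) :
    Integrable fun t ↦ exp (ν * t - c * cosh t) := by
  refine ((integrable_exp_neg_mul_sq (by positivity : 0 < c / 8)).const_mul
    (exp (2 * ν ^ 2 / c))).mono' (by fun_prop) (Filter.Eventually.of_forall fun t ↦ ?_)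
  rw [norm_of_nonneg (exp_nonneg _), ← exp_add]
  exact exp_le_exp.mpr (mul_sub_mul_cosh_le ν hc t)

lemma integral_exp_mul_sub_mul_cosh (ν : ℝ) {c : ℝ} (hc : 0 < c) :
    ∫ t, exp (ν * t - c * cosh t) = 2 * besselK ν c := by
  have hint := integrable_exp_mul_sub_mul_cosh ν hc
  have hint_neg := integrable_exp_mul_sub_mul_cosh (-ν) hc
  have hreflect : ∫ t in Iic 0, exp (ν * t - c * cosh t)
      = ∫ t in Ioi 0, exp (-ν * t - c * cosh t) := by
    simpa [cosh_neg] using (integral_comp_neg_Ioi 0 fun t ↦ exp (ν * t - c * cosh t)).symm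
  rw [← intervalIntegral.integral_Iic_add_Ioi hint.integrableOn hint.integrableOn, hreflect,
    ← integral_add hint_neg.integrableOn hint.integrableOn, besselK, ← integral_const_mul]
  refine setIntegral_congr_fun measurableSet_Ioi fun t _ ↦ ?_
  simp only [sub_eq_add_neg, exp_add, cosh_eq, neg_mul, exp_neg]
  ring

lemma besselK_abs (ν x : ℝ) : besselK |ν| x = besselK ν x := by
  refine setIntegral_congr_fun measurableSet_Ioi fun t (ht : 0 < t) ↦ ?_
  rw [show |ν| * t = |ν * t| by rw [abs_mul, abs_of_pos ht], cosh_abs]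

lemma image_const_mul_exp {a : ℝ} (ha : 0 < a) : (fun t ↦ a * exp t) '' univ = Ioi 0 := by
  rw [image_univ, range_comp' (a * ·) exp, range_exp, image_const_mul_Ioi_zero ha]

lemma abs_mul_rpow_mul_exp_neg_add_div (ν : ℝ) {x : ℝ} (hx : 0 < x) (t : ℝ) :
    |√x * exp t| * ((√x * exp t) ^ (ν - 1) * exp (-(√x * exp t + x / (√x * exp t))))
      = x ^ (ν / 2) * exp (ν * t - 2 * √x * cosh t) := by
  have hs : 0 < √x := sqrt_pos.mpr hx
  have hw : 0 < √x * exp t := by positivity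
  have hpow : (√x * exp t) ^ ν = x ^ (ν / 2) * exp (ν * t) := by
    rw [mul_rpow hs.le (exp_pos t).le, sqrt_eq_rpow, ← rpow_mul hx.le, ← exp_mul]
    ring_nf
  have hdiv : x / (√x * exp t) = √x * exp (-t) := by
    rw [exp_neg, div_mul_eq_div_div, div_sqrt, div_eq_mul_inv]
  rw [abs_of_pos hw, ← mul_assoc, rpow_sub_one hw.ne', mul_div_cancel₀ _ hw.ne', hpow, hdiv,
    mul_assoc, ← exp_add, cosh_eq]
  ring_nf

lemma lintegral_rpow_mul_exp_neg_add_div (ν : ℝ) {x : ℝ} (hx : 0 < x) :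
    ∫⁻ u in Ioi 0, ENNReal.ofReal (u ^ (ν - 1) * exp (-(u + x / u)))
      = ENNReal.ofReal (2 * x ^ (ν / 2) * besselK ν (2 * √x)) := by
  have hs : 0 < √x := sqrt_pos.mpr hx
  have hderiv : ∀ t ∈ univ, HasDerivWithinAt (fun t ↦ √x * exp t) (√x * exp t) univ t :=
    fun t _ ↦ ((hasDerivAt_exp t).const_mul √x).hasDerivWithinAt
  have hinj : InjOn (fun t ↦ √x * exp t) univ :=
    fun a _ b _ h ↦ exp_injective (mul_left_cancel₀ hs.ne' h)
  rw [← image_const_mul_exp hs, lintegral_image_eq_lintegral_abs_deriv_mul MeasurableSet.univ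
    hderiv hinj, Measure.restrict_univ]
  simp_rw [← ENNReal.ofReal_mul (abs_nonneg _), abs_mul_rpow_mul_exp_neg_add_div ν hx]
  rw [← ofReal_integral_eq_lintegral_ofReal
      ((integrable_exp_mul_sub_mul_cosh ν (by positivity)).const_mul _)
      (Filter.Eventually.of_forall fun t ↦ by positivity),
    integral_const_mul, integral_exp_mul_sub_mul_cosh ν (by positivity)]
  ring_nf

lemma lintegral_comp_mul_left {g : ℝ → ℝ≥0∞} (hg : Measurable g) {a : ℝ} (ha : a ≠ 0) :
    ∫⁻ x, g (a * x) = ENNReal.ofReal |a⁻¹| * ∫⁻ y, g y := by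
  rw [← lintegral_map hg (measurable_const_mul a), map_volume_mul_left ha,
    lintegral_smul_measure, smul_eq_mul]

lemma withDensity_preimage_const_mul {q : ℝ → ℝ≥0∞} (hq : Measurable q) {s : Set ℝ}
    (hs : MeasurableSet s) {a : ℝ} (ha : a ≠ 0) :
    volume.withDensity q ((a * ·) ⁻¹' s) = ENNReal.ofReal |a⁻¹| * ∫⁻ y in s, q (y / a) := by
  have hpre : ((a * ·) ⁻¹' s).indicator q = fun x ↦ s.indicator (fun y ↦ q (y / a)) (a * x) := by
    ext x
    by_cases h : a * x ∈ s <;> simp [h, mul_div_cancel_left₀ _ ha]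
  have hpre_meas : MeasurableSet ((a * ·) ⁻¹' s) := measurable_const_mul a hs
  rw [withDensity_apply _ hpre_meas, ← lintegral_indicator hpre_meas, hpre,
    lintegral_comp_mul_left (g := s.indicator fun y ↦ q (y / a))
      ((hq.comp (measurable_div_const a)).indicator hs) ha,
    lintegral_indicator hs]

theorem map_mul_prod_withDensity {p q : ℝ → ℝ≥0∞} (hp : Measurable p) (hq : Measurable q) :
    ((volume.withDensity p).prod (volume.withDensity q)).map (fun z ↦ z.1 * z.2)
      = volume.withDensity fun y ↦ ∫⁻ u, p u * q (y / u) * ENNReal.ofReal |u⁻¹| := by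
  have hmul : Measurable fun z : ℝ × ℝ ↦ z.1 * z.2 := measurable_fst.mul measurable_snd
  ext s hs
  rw [Measure.map_apply hmul hs, Measure.prod_apply (hmul hs),
    lintegral_withDensity_eq_lintegral_mul _ hp (measurable_measure_prodMk_left (hmul hs)),
    withDensity_apply _ hs]
  calc ∫⁻ u, (p * fun u ↦ volume.withDensity q (Prod.mk u ⁻¹' ((fun z ↦ z.1 * z.2) ⁻¹' s))) u
      = ∫⁻ u, ∫⁻ y in s, p u * q (y / u) * ENNReal.ofReal |u⁻¹| := by
        refine lintegral_congr_ae ?_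
        filter_upwards [compl_mem_ae_iff.mpr (measure_singleton (μ := volume) (0 : ℝ))]
          with u (hu : u ≠ 0)
        rw [Pi.mul_apply, show Prod.mk u ⁻¹' ((fun z ↦ z.1 * z.2) ⁻¹' s) = (u * ·) ⁻¹' s from rfl,
          withDensity_preimage_const_mul hq hs hu, ← lintegral_const_mul' _ _ (by simp),
          ← lintegral_const_mul _ (by fun_prop)]
        simp only [mul_comm, mul_assoc]
    _ = ∫⁻ y in s, ∫⁻ u, p u * q (y / u) * ENNReal.ofReal |u⁻¹| :=
        lintegral_lintegral_swap (by fun_prop)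

lemma gammaPDF_mul_gammaPDF_div {a b u y : ℝ} (ha : 0 < a) (hb : 0 < b) (hu : 0 < u)
    (hy : 0 < y) :
    gammaPDF a 1 u * gammaPDF b 1 (y / u) * ENNReal.ofReal |u⁻¹|
      = ENNReal.ofReal (y ^ (b - 1) / (Gamma b * Gamma a)) *
        ENNReal.ofReal (u ^ (a - b - 1) * exp (-(u + y / u))) := by
  have := Gamma_pos_of_pos ha
  have := Gamma_pos_of_pos hb
  rw [gammaPDF_of_nonneg hu.le, gammaPDF_of_nonneg (by positivity), abs_of_pos (inv_pos.mpr hu),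
    ← ENNReal.ofReal_mul (by positivity), ← ENNReal.ofReal_mul (by positivity),
    ← ENNReal.ofReal_mul (by positivity)]
  congr 1
  have hpow : u ^ (a - b - 1) = u ^ (a - 1) / u ^ (b - 1) / u := by
    rw [← rpow_sub hu, ← rpow_sub_one hu.ne']
    ring_nf
  rw [one_rpow, one_rpow, div_rpow hy.le hu.le, hpow, neg_add, exp_add]
  field_simp

lemma gammaPDF_mul_gammaPDF_div_of_nonpos {a b u : ℝ} (y : ℝ) (hu : u ≤ 0) :
    gammaPDF a 1 u * gammaPDF b 1 (y / u) * ENNReal.ofReal |u⁻¹| = 0 := by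
  rcases hu.lt_or_eq with hneg | rfl
  · simp [gammaPDF_of_neg hneg]
  · simp

lemma lintegral_gammaPDF_mul_gammaPDF_div_of_neg {a b y : ℝ} (hy : y < 0) :
    ∫⁻ u, gammaPDF a 1 u * gammaPDF b 1 (y / u) * ENNReal.ofReal |u⁻¹| = 0 := by
  have hzero : ∀ u, gammaPDF a 1 u * gammaPDF b 1 (y / u) * ENNReal.ofReal |u⁻¹| = 0 := by
    intro u
    rcases le_or_gt u 0 with hnonpos | hpos
    · exact gammaPDF_mul_gammaPDF_div_of_nonpos y hnonpos
    · simp [gammaPDF_of_neg (div_neg_of_neg_of_pos hy hpos)]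
  simp only [hzero, lintegral_zero]

lemma lintegral_gammaPDF_mul_gammaPDF_div_of_pos {a b y : ℝ} (ha : 0 < a) (hb : 0 < b)
    (hy : 0 < y) :
    ∫⁻ u, gammaPDF a 1 u * gammaPDF b 1 (y / u) * ENNReal.ofReal |u⁻¹|
      = ENNReal.ofReal
          (2 * y ^ ((b + a) / 2 - 1) * besselK |b - a| (2 * √y) / (Gamma b * Gamma a)) := by
  have hsupport : (fun u ↦ gammaPDF a 1 u * gammaPDF b 1 (y / u) * ENNReal.ofReal |u⁻¹|).support
      ⊆ Ioi 0 := by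
    exact fun u hu ↦ mem_Ioi.mpr <| lt_of_not_ge fun hu0 ↦
      hu (gammaPDF_mul_gammaPDF_div_of_nonpos y hu0)
  rw [← setLIntegral_eq_of_support_subset hsupport,
    setLIntegral_congr_fun measurableSet_Ioi fun u hu ↦ gammaPDF_mul_gammaPDF_div ha hb hu hy,
    lintegral_const_mul' _ _ ENNReal.ofReal_ne_top, lintegral_rpow_mul_exp_neg_add_div _ hy,
    ← ENNReal.ofReal_mul (by have := Gamma_pos_of_pos ha; have := Gamma_pos_of_pos hb; positivity),
    abs_sub_comm, besselK_abs]
  congr 1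
  have hpow : y ^ ((b + a) / 2 - 1) = y ^ (b - 1) * y ^ ((a - b) / 2) := by
    rw [← rpow_add hy]; ring_nf
  rw [hpow]
  ring

theorem map_mul_prod_gammaMeasure {a b : ℝ} (ha : 0 < a) (hb : 0 < b) :
    ((gammaMeasure a 1).prod (gammaMeasure b 1)).map (fun z ↦ z.1 * z.2) =
      volume.withDensity fun x ↦ ENNReal.ofReal (if 0 < x then
        2 * x ^ ((b + a) / 2 - 1) * besselK |b - a| (2 * √x) / (Gamma b * Gamma a) else 0) := by
  rw [gammaMeasure, gammaMeasure, map_mul_prod_withDensity (p := gammaPDF a 1)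
    (q := gammaPDF b 1) (measurable_gammaPDFReal a 1).ennreal_ofReal
    (measurable_gammaPDFReal b 1).ennreal_ofReal]
  refine withDensity_congr_ae ?_
  filter_upwards [compl_mem_ae_iff.mpr (measure_singleton (μ := volume) (0 : ℝ))]
    with x (hx : x ≠ 0)
  rcases hx.lt_or_gt with hneg | hpos
  · rw [lintegral_gammaPDF_mul_gammaPDF_div_of_neg hneg, if_neg hneg.not_gt, ENNReal.ofReal_zero]
  · rw [lintegral_gammaPDF_mul_gammaPDF_div_of_pos ha hb hpos, if_pos hpos]

/-- The product of independent `Gamma(N_R,1)` and `Gamma(N_T,1)` random variables has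
density `f(x) = 2 x^((N_T+N_R)/2 - 1) K_τ(2√x) / (Γ(N_T)Γ(N_R))` for `x > 0`,
where `τ = |N_T - N_R|`. -/
theorem stmt_4 {Ω : Type*} [MeasurableSpace Ω] (μ : Measure Ω) [IsProbabilityMeasure μ]
    (NT NR : ℕ) (hNT : 0 < NT) (hNR : 0 < NR)
    (U V : Ω → ℝ) (hU : Measurable U) (hV : Measurable V)
    (hindep : IndepFun U V μ)
    (hUlaw : μ.map U = gammaMeasure NR 1) (hVlaw : μ.map V = gammaMeasure NT 1) :
    μ.map (fun ω => U ω * V ω) =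
      volume.withDensity (fun x => ENNReal.ofReal
        (if 0 < x then
          2 * x ^ (((NT : ℝ) + NR) / 2 - 1) * besselK |(NT : ℝ) - NR| (2 * Real.sqrt x) /
            (Real.Gamma NT * Real.Gamma NR)
        else 0)) := by
  have hpair : μ.map (fun ω ↦ (U ω, V ω)) = (gammaMeasure NR 1).prod (gammaMeasure NT 1) := by
    rw [← hUlaw, ← hVlaw]
    exact hindep.map_prod_eq_prod_map_map hU.aemeasurable hV.aemeasurable
  rw [← map_mul_prod_gammaMeasure (Nat.cast_pos.mpr hNR) (Nat.cast_pos.mpr hNT), ← hpair,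
    Measure.map_map (by fun_prop) (hU.prodMk hV)]
  rfl
end

section
/- For positive integers N_T ≠ N_R with τ = |N_T − N_R|, as ε → 0⁺, ∫₀^ε 2 x^{(N_T+N_R)/2 − 1} K_τ(2√x) dx / (Γ(N_T)Γ(N_R)) ~ Γ(τ) ε^{min(N_T,N_R)} / (Γ(N_T)Γ(N_R) min(N_T,N_R)). -/
/-!
Splitting `2 cosh (τ t) = e^{τ t} + e^{-τ t}` and using that `cosh` is even gives
`2 K_τ(y) = ∫_ℝ e^{-y cosh t} e^{τ t} dt`; the substitution `u = (y/2) e^t` turns this into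
`y^τ K_τ(y) = 2^{τ-1} ∫₀^∞ exp(-u - y²/(4u)) u^{τ-1} du`. The integrand is dominated by the
Gamma integrand `e^{-u} u^{τ-1}` uniformly in `y`, so the right side is continuous in `y` and
`y^τ K_τ(y) → 2^{τ-1} Γ(τ)` as `y → 0⁺`. Since `(N_T + N_R)/2 - τ/2 = min N_T N_R =: m`, the
integrand `2 x^{(N_T+N_R)/2-1} K_τ(2√x)` is then asymptotic to `Γ(τ) x^{m-1}`, and integrating an
asymptotic equivalence against a nonnegative comparison function preserves it.
-/

open MeasureTheory Real Set Filter Asymptotics Topology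

section ExpSubstitution

variable {E : Type*} [NormedAddCommGroup E] [NormedSpace ℝ E]

theorem integral_comp_exp (g : ℝ → E) : ∫ x, exp x • g (exp x) = ∫ y in Ioi 0, g y := by
  symm
  rw [← range_exp, ← image_univ]
  simpa [abs_of_pos (exp_pos _)] using integral_image_eq_integral_abs_deriv_smul
    MeasurableSet.univ (fun x _ ↦ (hasDerivAt_exp x).hasDerivWithinAt)
    (fun x _ y _ hxy ↦ exp_injective hxy) g

theorem integrable_comp_exp_iff (g : ℝ → E) :
    Integrable (fun x ↦ exp x • g (exp x)) ↔ IntegrableOn g (Ioi 0) := by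
  symm
  rw [← range_exp, ← image_univ]
  simpa [abs_of_pos (exp_pos _)] using integrableOn_image_iff_integrableOn_abs_deriv_smul
    MeasurableSet.univ (fun x _ ↦ (hasDerivAt_exp x).hasDerivWithinAt)
    (fun x _ y _ hxy ↦ exp_injective hxy) g

end ExpSubstitution

theorem Asymptotics.IsEquivalent.setIntegral_Ioc {u v : ℝ → ℝ} {a : ℝ}
    (huv : u ~[𝓝[>] a] v) (hu : AEStronglyMeasurable u (volume.restrict (Ioi a)))
    (hv : ∀ᶠ ε in 𝓝[>] a, IntegrableOn v (Ioc a ε)) (hv_nonneg : ∀ᶠ x in 𝓝[>] a, 0 ≤ v x) :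
    (fun ε ↦ ∫ x in Ioc a ε, u x) ~[𝓝[>] a] fun ε ↦ ∫ x in Ioc a ε, v x := by
  refine IsLittleO.of_bound fun c hc ↦ ?_
  obtain ⟨b, hab, hb⟩ := (nhdsGT_basis a).mem_iff.1
    ((huv.isLittleO.bound hc).and hv_nonneg)
  filter_upwards [hv, Ioo_mem_nhdsGT hab] with ε hvε hε
  have hbound : ∀ x ∈ Ioc a ε, ‖u x - v x‖ ≤ c * v x ∧ 0 ≤ v x := fun x hx ↦ by
    obtain ⟨h, hv0⟩ := hb ⟨hx.1, hx.2.trans_lt hε.2⟩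
    simpa [abs_of_nonneg hv0] using And.intro h hv0
  have hdiff : IntegrableOn (fun x ↦ u x - v x) (Ioc a ε) :=
    (hvε.const_mul c).mono' ((hu.mono_set Ioc_subset_Ioi_self).sub hvε.aestronglyMeasurable)
      ((ae_restrict_mem measurableSet_Ioc).mono fun x hx ↦ (hbound x hx).1)
  have hint_nonneg : 0 ≤ ∫ x in Ioc a ε, v x :=
    setIntegral_nonneg_of_ae_restrict ((ae_restrict_mem measurableSet_Ioc).mono
      fun x hx ↦ (hbound x hx).2)
  calc ‖(∫ x in Ioc a ε, u x) - ∫ x in Ioc a ε, v x‖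
      = ‖∫ x in Ioc a ε, (u x - v x)‖ := by
        rw [← integral_sub ((hdiff.add hvε).congr_fun (fun x _ ↦ sub_add_cancel _ _)
          measurableSet_Ioc) hvε]
    _ ≤ ∫ x in Ioc a ε, c * v x :=
        norm_integral_le_of_norm_le (hvε.const_mul c)
          ((ae_restrict_mem measurableSet_Ioc).mono fun x hx ↦ (hbound x hx).1)
    _ = c * ‖∫ x in Ioc a ε, v x‖ := by
        rw [integral_const_mul, norm_of_nonneg hint_nonneg]

theorem integral_Ioc_zero_pow (n : ℕ) {ε : ℝ} (hε : 0 ≤ ε) :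
    ∫ x in Ioc 0 ε, x ^ n = ε ^ (n + 1) / (n + 1) := by
  rw [← intervalIntegral.integral_of_le hε, integral_pow]
  simp

theorem Asymptotics.IsEquivalent.tendsto_setIntegral_Ioc_div_pow {u : ℝ → ℝ} {c : ℝ} {n : ℕ}
    (hu : u ~[𝓝[>] 0] fun x ↦ c * x ^ n)
    (hu_meas : AEStronglyMeasurable u (volume.restrict (Ioi 0))) (hc : 0 < c) :
    Tendsto (fun ε ↦ (∫ x in Ioc 0 ε, u x) / (c * ε ^ (n + 1) / (n + 1))) (𝓝[>] 0) (𝓝 1) := by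
  refine (isEquivalent_iff_tendsto_one ?_).1 ((hu.setIntegral_Ioc hu_meas ?_ ?_).congr_right ?_)
  · filter_upwards [self_mem_nhdsWithin] with ε (hε : 0 < ε)
    positivity
  · exact Eventually.of_forall fun ε ↦ (by fun_prop : Continuous _).integrableOn_Ioc
  · filter_upwards [self_mem_nhdsWithin] with x (hx : 0 < x)
    positivity
  · filter_upwards [self_mem_nhdsWithin] with ε (hε : 0 < ε)
    rw [integral_const_mul, integral_Ioc_zero_pow n hε.le, mul_div_assoc]

section BesselK

variable {τ y : ℝ}

@[fun_prop]
theorem measurable_besselK (ν : ℝ) : Measurable (besselK ν) :=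
  (by fun_prop : Continuous fun p : ℝ × ℝ ↦ exp (-p.1 * cosh p.2) * cosh (ν * p.2))
    |>.stronglyMeasurable.integral_prod_right' |>.measurable

theorem exp_neg_mul_cosh_mul_exp_eq (τ y t : ℝ) :
    exp (-y * cosh t) * exp (τ * t) =
      exp t * (exp (-(y / 2) * (exp t + (exp t)⁻¹)) * exp t ^ (τ - 1)) := by
  rw [← exp_mul, ← exp_neg, cosh_eq, ← exp_add, ← exp_add, ← exp_add]
  ring_nf

theorem integrableOn_exp_neg_mul_add_inv_mul_rpow (hτ : 0 < τ) (hy : 0 < y) :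
    IntegrableOn (fun v ↦ exp (-(y / 2) * (v + v⁻¹)) * v ^ (τ - 1)) (Ioi 0) := by
  refine (integrableOn_rpow_mul_exp_neg_mul_rpow (s := τ - 1) (by linarith) one_pos
    (half_pos hy)).mono' (by fun_prop)
    ((ae_restrict_mem measurableSet_Ioi).mono fun v (hv : 0 < v) ↦ ?_)
  rw [norm_of_nonneg (by positivity), rpow_one, mul_comm (v ^ _)]
  exact mul_le_mul_of_nonneg_right (exp_le_exp.2 (by nlinarith [inv_pos.2 hv])) (by positivity)

theorem integrable_exp_neg_mul_cosh_mul_exp (hτ : 0 < τ) (hy : 0 < y) :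
    Integrable fun t ↦ exp (-y * cosh t) * exp (τ * t) := by
  simpa only [smul_eq_mul, ← exp_neg_mul_cosh_mul_exp_eq] using
    (integrable_comp_exp_iff _).2 (integrableOn_exp_neg_mul_add_inv_mul_rpow hτ hy)

theorem two_mul_besselK_eq_integral (hτ : 0 < τ) (hy : 0 < y) :
    2 * besselK τ y = ∫ t, exp (-y * cosh t) * exp (τ * t) := by
  set g : ℝ → ℝ := fun t ↦ exp (-y * cosh t) * exp (τ * t)
  have hg : Integrable g := integrable_exp_neg_mul_cosh_mul_exp hτ hy
  have hsymm : ∀ t, 2 * (exp (-y * cosh t) * cosh (τ * t)) = g (-t) + g t := fun t ↦ by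
    simp only [g, cosh_eq]
    ring_nf
  rw [besselK, ← integral_const_mul, ← intervalIntegral.integral_Iic_add_Ioi hg.integrableOn
    hg.integrableOn, ← neg_zero, ← integral_comp_neg_Ioi, neg_zero, ← integral_add
    hg.comp_neg.integrableOn hg.integrableOn]
  simp_rw [hsymm]

theorem two_mul_besselK_eq_integral_Ioi (hτ : 0 < τ) (hy : 0 < y) :
    2 * besselK τ y = ∫ v in Ioi 0, exp (-(y / 2) * (v + v⁻¹)) * v ^ (τ - 1) := by
  rw [two_mul_besselK_eq_integral hτ hy, ← integral_comp_exp]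
  simp only [smul_eq_mul, exp_neg_mul_cosh_mul_exp_eq]

theorem rpow_mul_besselK_eq_integral (hτ : 0 < τ) (hy : 0 < y) :
    y ^ τ * besselK τ y =
      2 ^ (τ - 1) * ∫ u in Ioi 0, exp (-u - y ^ 2 / (4 * u)) * u ^ (τ - 1) := by
  have hb : (0 : ℝ) < 2 / y := by positivity
  have hscale : ∀ u ∈ Ioi (0 : ℝ),
      exp (-(y / 2) * (2 / y * u + (2 / y * u)⁻¹)) * (2 / y * u) ^ (τ - 1) =
        (2 / y) ^ (τ - 1) * (exp (-u - y ^ 2 / (4 * u)) * u ^ (τ - 1)) := fun u hu ↦ by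
    rw [mul_rpow hb.le (le_of_lt hu)]
    field_simp
    ring_nf
  have hpow : y ^ τ / 2 * (2 / y) * (2 / y) ^ (τ - 1) = 2 ^ (τ - 1) := by
    rw [rpow_sub_one hb.ne', div_rpow zero_le_two hy.le, rpow_sub_one two_ne_zero]
    field_simp
  have hsub := integral_comp_mul_left_Ioi' (fun v ↦ exp (-(y / 2) * (v + v⁻¹)) * v ^ (τ - 1)) 0 hb
  rw [mul_zero] at hsub
  calc y ^ τ * besselK τ y = y ^ τ / 2 * (2 * besselK τ y) := by ring
    _ = y ^ τ / 2 * (2 / y * ∫ u in Ioi 0,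
          exp (-(y / 2) * (2 / y * u + (2 / y * u)⁻¹)) * (2 / y * u) ^ (τ - 1)) := by
      rw [two_mul_besselK_eq_integral_Ioi hτ hy, ← hsub, smul_eq_mul]
    _ = 2 ^ (τ - 1) * ∫ u in Ioi 0, exp (-u - y ^ 2 / (4 * u)) * u ^ (τ - 1) := by
      rw [setIntegral_congr_fun measurableSet_Ioi hscale, integral_const_mul, ← mul_assoc,
        ← mul_assoc, hpow]

theorem continuous_integral_exp_neg_sub_sq_div_mul_rpow (hτ : 0 < τ) :
    Continuous fun y : ℝ ↦ ∫ u in Ioi 0, exp (-u - y ^ 2 / (4 * u)) * u ^ (τ - 1) := by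
  refine continuous_of_dominated (fun y ↦ ?_) (fun y ↦ ?_) (GammaIntegral_convergent hτ) ?_
  · exact (by fun_prop : Measurable _).aestronglyMeasurable
  · filter_upwards [ae_restrict_mem measurableSet_Ioi] with u (hu : 0 < u)
    rw [norm_of_nonneg (by positivity)]
    exact mul_le_mul_of_nonneg_right (exp_le_exp.2 (sub_le_self _ (by positivity)))
      (by positivity)
  · exact ae_of_all _ fun u ↦ by fun_prop

theorem tendsto_rpow_mul_besselK (hτ : 0 < τ) :
    Tendsto (fun y ↦ y ^ τ * besselK τ y) (𝓝[>] 0) (𝓝 (2 ^ (τ - 1) * Gamma τ)) := by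
  have hcont := ((continuous_integral_exp_neg_sub_sq_div_mul_rpow hτ).tendsto 0).mono_left
    (nhdsWithin_le_nhds (s := Ioi 0))
  simp only [ne_eq, OfNat.ofNat_ne_zero, not_false_eq_true, zero_pow, zero_div, sub_zero,
    ← Gamma_eq_integral hτ] at hcont
  refine (hcont.const_mul _).congr' ?_
  filter_upwards [self_mem_nhdsWithin] with y (hy : 0 < y)
  rw [rpow_mul_besselK_eq_integral hτ hy]

theorem isEquivalent_besselK (hτ : 0 < τ) :
    besselK τ ~[𝓝[>] 0] fun y ↦ Gamma τ / 2 * (y / 2) ^ (-τ) := by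
  have hΓ := Gamma_pos_of_pos hτ
  have hlim := (tendsto_rpow_mul_besselK hτ).div_const (2 ^ (τ - 1) * Gamma τ)
  rw [div_self (by positivity)] at hlim
  refine isEquivalent_of_tendsto_one (hlim.congr' ?_)
  filter_upwards [self_mem_nhdsWithin] with y (hy : 0 < y)
  rw [Pi.div_apply, rpow_neg (by positivity), div_rpow hy.le zero_le_two,
    rpow_sub_one two_ne_zero]
  field_simp

theorem isEquivalent_rpow_mul_besselK_two_mul_sqrt (s : ℝ) (hτ : 0 < τ) :
    (fun x ↦ 2 * x ^ (s - 1) * besselK τ (2 * √x)) ~[𝓝[>] 0]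
      fun x ↦ Gamma τ * x ^ (s - 1 - τ / 2) := by
  have h2sqrt : Tendsto (fun x ↦ 2 * √x) (𝓝[>] 0) (𝓝[>] 0) := by
    refine tendsto_nhdsWithin_of_tendsto_nhds_of_eventually_within _ ?_ ?_
    · exact ((continuous_const.mul continuous_sqrt).tendsto' 0 0 (by simp)).mono_left
        nhdsWithin_le_nhds
    · filter_upwards [self_mem_nhdsWithin] with x (hx : 0 < x)
      exact mul_pos two_pos (sqrt_pos.2 hx)
  refine (IsEquivalent.refl.mul ((isEquivalent_besselK hτ).comp_tendsto h2sqrt)).congr_right ?_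
  filter_upwards [self_mem_nhdsWithin] with x (hx : 0 < x)
  rw [Pi.mul_apply, Function.comp_apply, mul_div_cancel_left₀ _ two_ne_zero, sqrt_eq_rpow,
    ← rpow_mul hx.le, sub_eq_add_neg _ (τ / 2), rpow_add hx]
  ring_nf

end BesselK

theorem stmt_7 (NT NR : ℕ) (hNT : 0 < NT) (hNR : 0 < NR) (hne : NT ≠ NR) :
    Filter.Tendsto
      (fun ε : ℝ =>
        (∫ x in Set.Ioc (0 : ℝ) ε,
            2 * x ^ (((NT : ℝ) + NR) / 2 - 1) * besselK |(NT : ℝ) - NR| (2 * Real.sqrt x) /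
              (Real.Gamma NT * Real.Gamma NR)) /
          (Real.Gamma |(NT : ℝ) - NR| * ε ^ (min NT NR : ℕ) /
            (Real.Gamma NT * Real.Gamma NR * (min NT NR : ℕ))))
      (nhdsWithin 0 (Set.Ioi 0)) (nhds 1) := by
  set τ : ℝ := |(NT : ℝ) - NR|
  set C : ℝ := Gamma NT * Gamma NR
  obtain ⟨k, hk⟩ : ∃ k, min NT NR = k + 1 := Nat.exists_eq_add_one.2 (lt_min hNT hNR)
  have hτ : 0 < τ := abs_pos.2 (sub_ne_zero.2 (by exact_mod_cast hne))
  have hC : 0 < C := mul_pos (Gamma_pos_of_pos (by exact_mod_cast hNT))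
    (Gamma_pos_of_pos (by exact_mod_cast hNR))
  have hexp : ((NT : ℝ) + NR) / 2 - 1 - τ / 2 = k := by
    linarith [min_add_max (NT : ℝ) NR, max_sub_min_eq_abs' (NT : ℝ) NR,
      (by exact_mod_cast hk : min (NT : ℝ) NR = k + 1)]
  have hequiv : (fun x ↦ 2 * x ^ (((NT : ℝ) + NR) / 2 - 1) * besselK τ (2 * √x) / C)
      ~[𝓝[>] 0] fun x ↦ Gamma τ / C * x ^ k := by
    refine ((isEquivalent_rpow_mul_besselK_two_mul_sqrt _ hτ).div IsEquivalent.refl).congr_right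
      (Eventually.of_forall fun x ↦ ?_)
    simp only [Pi.div_apply, hexp, rpow_natCast, div_mul_eq_mul_div]
  have hlim := hequiv.tendsto_setIntegral_Ioc_div_pow (by fun_prop) (by positivity)
  rw [hk]
  refine hlim.congr fun ε ↦ congrArg _ ?_
  push_cast
  field_simp
end

section
/- For positive integers m ≠ n with τ = |m − n|, the CDF F(x) of the product of independent Gamma(m,1) and Gamma(n,1) random variables satisfies lim_{x→0⁺} F(x)/x^{min(m,n)} = Γ(τ)/(Γ(m)Γ(n) min(m,n)). -/
/-- The CDF of the product of independent Gamma(m,1) and Gamma(n,1) random variables,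
via its density on `(0,∞)`. -/
noncomputable def prodGammaCDF (m n : ℕ) (x : ℝ) : ℝ :=
  ∫ t in Set.Ioc (0 : ℝ) x,
    2 * t ^ (((m : ℝ) + n) / 2 - 1) * besselK |(m : ℝ) - n| (2 * Real.sqrt t) /
      (Real.Gamma m * Real.Gamma n)

open Set MeasureTheory Real Filter Topology

section Averaging

variable {g : ℝ → ℝ} {L : ℝ}

theorem AntitoneOn.le_of_tendsto_nhdsGT_zero (hg : AntitoneOn g (Ioi 0))
    (hL : Tendsto g (𝓝[>] 0) (𝓝 L)) {t : ℝ} (ht : 0 < t) : g t ≤ L :=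
  ge_of_tendsto hL <| mem_of_superset (Ioo_mem_nhdsGT ht) fun _ hs => hg hs.1 ht hs.2.le

theorem AntitoneOn.integrableOn_pow_mul_Ioc (hg : AntitoneOn g (Ioi 0))
    (hL : Tendsto g (𝓝[>] 0) (𝓝 L)) (k : ℕ) {x : ℝ} (hx : 0 < x) :
    IntegrableOn (fun t => t ^ k * g t) (Ioc 0 x) := by
  have hmeas : AEStronglyMeasurable g (volume.restrict (Ioc 0 x)) :=
    (aemeasurable_restrict_of_antitoneOn measurableSet_Ioc
      (hg.mono Ioc_subset_Ioi_self)).aestronglyMeasurable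
  refine .of_bound measure_Ioc_lt_top
    ((continuous_pow k).aestronglyMeasurable.restrict.mul hmeas) (x ^ k * max |g x| |L|) ?_
  filter_upwards [ae_restrict_mem measurableSet_Ioc] with t ht
  rw [norm_mul, Real.norm_eq_abs, Real.norm_eq_abs, abs_of_nonneg (pow_nonneg ht.1.le k)]
  exact mul_le_mul (pow_le_pow_left₀ ht.1.le ht.2 k)
    (abs_le_max_abs_abs (hg ht.1 hx ht.2) (hg.le_of_tendsto_nhdsGT_zero hL ht.1))
    (abs_nonneg _) (pow_nonneg hx.le k)

theorem setIntegral_pow_Ioc (k : ℕ) {x : ℝ} (hx : 0 ≤ x) :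
    ∫ t in Ioc 0 x, t ^ k = x ^ (k + 1) / (k + 1) := by
  rw [← intervalIntegral.integral_of_le hx, integral_pow, zero_pow k.succ_ne_zero, sub_zero]

theorem AntitoneOn.le_setIntegral_pow_mul (hg : AntitoneOn g (Ioi 0))
    (hL : Tendsto g (𝓝[>] 0) (𝓝 L)) (k : ℕ) {x : ℝ} (hx : 0 < x) :
    x ^ (k + 1) / (k + 1) * g x ≤ ∫ t in Ioc 0 x, t ^ k * g t := by
  rw [← setIntegral_pow_Ioc k hx.le, ← integral_mul_const]
  exact setIntegral_mono_on ((continuous_pow k).mul continuous_const).integrableOn_Ioc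
    (hg.integrableOn_pow_mul_Ioc hL k hx) measurableSet_Ioc fun t ht =>
      mul_le_mul_of_nonneg_left (hg ht.1 hx ht.2) (pow_nonneg ht.1.le k)

theorem AntitoneOn.setIntegral_pow_mul_le (hg : AntitoneOn g (Ioi 0))
    (hL : Tendsto g (𝓝[>] 0) (𝓝 L)) (k : ℕ) {x : ℝ} (hx : 0 < x) :
    ∫ t in Ioc 0 x, t ^ k * g t ≤ x ^ (k + 1) / (k + 1) * L := by
  rw [← setIntegral_pow_Ioc k hx.le, ← integral_mul_const]
  exact setIntegral_mono_on (hg.integrableOn_pow_mul_Ioc hL k hx)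
    ((continuous_pow k).mul continuous_const).integrableOn_Ioc measurableSet_Ioc fun t ht =>
      mul_le_mul_of_nonneg_left (hg.le_of_tendsto_nhdsGT_zero hL ht.1) (pow_nonneg ht.1.le k)

theorem AntitoneOn.tendsto_setIntegral_pow_mul_div_pow (hg : AntitoneOn g (Ioi 0))
    (hL : Tendsto g (𝓝[>] 0) (𝓝 L)) (k : ℕ) :
    Tendsto (fun x => (∫ t in Ioc 0 x, t ^ k * g t) / x ^ (k + 1)) (𝓝[>] 0)
      (𝓝 (L / (k + 1))) := by
  refine tendsto_of_tendsto_of_tendsto_of_le_of_le' (hL.div_const (k + 1)) tendsto_const_nhds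
    ?_ ?_ <;> filter_upwards [self_mem_nhdsWithin] with x (hx : 0 < x)
  · rw [le_div_iff₀ (pow_pos hx _)]
    exact le_of_eq_of_le (by ring) (hg.le_setIntegral_pow_mul hL k hx)
  · rw [div_le_iff₀ (pow_pos hx _)]
    exact (hg.setIntegral_pow_mul_le hL k hx).trans_eq (by ring)

end Averaging

section ExpSubstitution

variable {c : ℝ}

theorem image_univ_const_mul_exp (hc : 0 < c) : (fun u => c * exp u) '' univ = Ioi 0 := by
  rw [← image_image (c * ·) exp, image_univ, range_exp, image_const_mul_Ioi_zero hc]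

theorem hasDerivWithinAt_const_mul_exp (u : ℝ) :
    HasDerivWithinAt (fun u => c * exp u) (c * exp u) univ u :=
  ((hasDerivAt_exp u).const_mul c).hasDerivWithinAt

theorem injOn_const_mul_exp (hc : 0 < c) : InjOn (fun u => c * exp u) univ :=
  fun _ _ _ _ h => exp_injective (mul_left_cancel₀ hc.ne' h)

theorem integral_Ioi_eq_integral_const_mul_exp (hc : 0 < c) (g : ℝ → ℝ) :
    ∫ s in Ioi 0, g s = ∫ u, c * exp u * g (c * exp u) := by
  rw [← image_univ_const_mul_exp hc, integral_image_eq_integral_abs_deriv_smul MeasurableSet.univ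
    (fun u _ => hasDerivWithinAt_const_mul_exp u) (injOn_const_mul_exp hc), Measure.restrict_univ]
  simp only [smul_eq_mul, abs_of_pos (mul_pos hc (exp_pos _))]

theorem integrableOn_Ioi_iff_integrable_const_mul_exp (hc : 0 < c) (g : ℝ → ℝ) :
    IntegrableOn g (Ioi 0) ↔ Integrable fun u => c * exp u * g (c * exp u) := by
  rw [← image_univ_const_mul_exp hc, integrableOn_image_iff_integrableOn_abs_deriv_smul
    MeasurableSet.univ (fun u _ => hasDerivWithinAt_const_mul_exp u) (injOn_const_mul_exp hc),
    integrableOn_univ]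
  simp only [smul_eq_mul, abs_of_pos (mul_pos hc (exp_pos _))]

end ExpSubstitution

theorem two_mul_besselK {ν x : ℝ} (h : Integrable fun u => exp (-x * cosh u) * exp (ν * u)) :
    2 * besselK ν x = ∫ u, exp (-x * cosh u) * exp (ν * u) := by
  have h_neg : Integrable fun u => exp (-x * cosh u) * exp (-(ν * u)) := by
    simpa using h.comp_neg
  have h_even : ∀ u, exp (-x * cosh |u|) * cosh (ν * |u|) = exp (-x * cosh u) * cosh (ν * u) := by
    intro u
    rcases abs_choice u with hu | hu <;> simp [hu]
  calc 2 * besselK ν x = ∫ u, exp (-x * cosh u) * cosh (ν * u) := by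
        rw [besselK, ← integral_comp_abs]; simp only [h_even]
    _ = ((∫ u, exp (-x * cosh u) * exp (ν * u)) +
          ∫ u, exp (-x * cosh u) * exp (-(ν * u))) / 2 := by
        rw [← integral_add h h_neg, ← integral_div]
        congr 1 with u
        rw [cosh_eq (ν * u)]
        ring
    _ = ∫ u, exp (-x * cosh u) * exp (ν * u) := by
        rw [← integral_neg_eq_self]
        simp only [cosh_neg, mul_neg]
        ring

/-- The Krätzel function `Z_τ(x) = ∫₀^∞ e^{-s - x/s} s^{τ-1} ds`. -/
noncomputable def kratzel (τ x : ℝ) : ℝ :=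
  ∫ s in Ioi 0, exp (-s - x / s) * s ^ (τ - 1)

section Kratzel

variable {τ : ℝ}

theorem aestronglyMeasurable_kratzel_integrand (x : ℝ) :
    AEStronglyMeasurable (fun s => exp (-s - x / s) * s ^ (τ - 1)) (volume.restrict (Ioi 0)) :=
  ContinuousOn.aestronglyMeasurable (by fun_prop (disch := exact fun s hs => ne_of_gt hs))
    measurableSet_Ioi

theorem kratzel_integrand_bound {x : ℝ} (hx : 0 ≤ x) :
    ∀ᵐ s ∂volume.restrict (Ioi 0),
      ‖exp (-s - x / s) * s ^ (τ - 1)‖ ≤ exp (-s) * s ^ (τ - 1) := by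
  filter_upwards [ae_restrict_mem measurableSet_Ioi] with s (hs : 0 < s)
  rw [Real.norm_of_nonneg (by positivity)]
  gcongr
  linarith [div_nonneg hx hs.le]

theorem integrableOn_kratzel_integrand (hτ : 0 < τ) {x : ℝ} (hx : 0 ≤ x) :
    IntegrableOn (fun s => exp (-s - x / s) * s ^ (τ - 1)) (Ioi 0) :=
  (GammaIntegral_convergent hτ).mono' (aestronglyMeasurable_kratzel_integrand x)
    (kratzel_integrand_bound hx)

theorem kratzel_antitoneOn (hτ : 0 < τ) : AntitoneOn (kratzel τ) (Ici 0) :=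
  fun x hx y hy hxy => setIntegral_mono_on (integrableOn_kratzel_integrand hτ hy)
    (integrableOn_kratzel_integrand hτ hx) measurableSet_Ioi fun s (hs : 0 < s) => by gcongr

theorem tendsto_kratzel_nhdsGT_zero (hτ : 0 < τ) :
    Tendsto (kratzel τ) (𝓝[>] 0) (𝓝 (Gamma τ)) := by
  rw [Gamma_eq_integral hτ]
  refine tendsto_integral_filter_of_dominated_convergence _
    (.of_forall aestronglyMeasurable_kratzel_integrand)
    (eventually_nhdsWithin_of_forall fun x (hx : 0 < x) => kratzel_integrand_bound hx.le)
    (GammaIntegral_convergent hτ) ?_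
  filter_upwards [ae_restrict_mem measurableSet_Ioi] with s (hs : 0 < s)
  have hcont : Continuous fun x => exp (-s - x / s) * s ^ (τ - 1) := by fun_prop
  simpa using (hcont.tendsto 0).mono_left nhdsWithin_le_nhds

theorem const_mul_exp_mul_kratzel_integrand {c : ℝ} (hc : 0 < c) (u : ℝ) :
    c * exp u * (exp (-(c * exp u) - c ^ 2 / (c * exp u)) * (c * exp u) ^ (τ - 1)) =
      c ^ τ * (exp (-(2 * c) * cosh u) * exp (τ * u)) := by
  have hce : 0 < c * exp u := mul_pos hc (exp_pos u)
  have h_exp : -(c * exp u) - c ^ 2 / (c * exp u) = -(2 * c) * cosh u := by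
    rw [cosh_eq, exp_neg]
    field_simp
    ring
  have h_pow : c * exp u * (c * exp u) ^ (τ - 1) = c ^ τ * exp (τ * u) := by
    rw [rpow_sub_one hce.ne', mul_div_cancel₀ _ hce.ne', mul_rpow hc.le (exp_pos u).le,
      ← exp_mul, mul_comm u]
  rw [h_exp, mul_left_comm, h_pow]
  ring

theorem kratzel_eq_besselK {x : ℝ} (hτ : 0 < τ) (hx : 0 < x) :
    kratzel τ x = 2 * x ^ (τ / 2) * besselK τ (2 * √x) := by
  set c := √x
  have hc : 0 < c := sqrt_pos.mpr hx
  have hcx : c ^ 2 = x := sq_sqrt hx.le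
  have hcτ : c ^ τ = (c ^ 2) ^ (τ / 2) := by
    rw [← rpow_natCast, ← rpow_mul hc.le]
    ring_nf
  have h_subst := integral_Ioi_eq_integral_const_mul_exp hc
    fun s => exp (-s - c ^ 2 / s) * s ^ (τ - 1)
  have h_int : Integrable fun u => exp (-(2 * c) * cosh u) * exp (τ * u) := by
    have h := (integrableOn_Ioi_iff_integrable_const_mul_exp hc
      fun s => exp (-s - c ^ 2 / s) * s ^ (τ - 1)).mp
        (integrableOn_kratzel_integrand hτ (sq_nonneg c))
    simp only [const_mul_exp_mul_kratzel_integrand hc] at h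
    exact (h.const_mul (c ^ τ)⁻¹).congr (.of_forall fun u => inv_mul_cancel_left₀
      (rpow_pos_of_pos hc τ).ne' _)
  rw [← hcx, kratzel, h_subst]
  simp only [const_mul_exp_mul_kratzel_integrand hc]
  rw [integral_const_mul, ← two_mul_besselK h_int, hcτ]
  ring

end Kratzel

theorem add_div_two_sub_one_eq_add_abs_sub_div_two {m n k : ℕ} (hk : min m n = k + 1) :
    ((m : ℝ) + n) / 2 - 1 = k + |(m : ℝ) - n| / 2 := by
  have h_min : min (m : ℝ) n = k + 1 := by exact_mod_cast hk
  have h_sum := min_add_max (m : ℝ) n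
  have h_diff := max_sub_min_eq_abs (m : ℝ) n
  rw [abs_sub_comm] at h_diff
  linarith

theorem prodGammaCDF_eq_integral_pow_mul_kratzel {m n k : ℕ} (hmn : m ≠ n)
    (hk : min m n = k + 1) (x : ℝ) :
    prodGammaCDF m n x =
      (∫ t in Ioc 0 x, t ^ k * kratzel |(m : ℝ) - n| t) / (Gamma m * Gamma n) := by
  have hτ : 0 < |(m : ℝ) - n| := abs_sub_pos.mpr (Nat.cast_injective.ne hmn)
  rw [prodGammaCDF, integral_div]
  refine congrArg (· / _) (setIntegral_congr_fun measurableSet_Ioc fun t ht => ?_)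
  rw [kratzel_eq_besselK hτ ht.1, add_div_two_sub_one_eq_add_abs_sub_div_two hk, rpow_add ht.1,
    rpow_natCast]
  ring

theorem stmt_9 (m n : ℕ) (hm : 0 < m) (hn : 0 < n) (hmn : m ≠ n) :
    Filter.Tendsto (fun x : ℝ => prodGammaCDF m n x / x ^ (min m n : ℕ))
      (nhdsWithin 0 (Set.Ioi 0))
      (nhds (Real.Gamma |(m : ℝ) - n| / (Real.Gamma m * Real.Gamma n * (min m n : ℕ)))) := by
  obtain ⟨k, hk⟩ : ∃ k, min m n = k + 1 := Nat.exists_eq_add_one.mpr (lt_min hm hn)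
  have hτ : 0 < |(m : ℝ) - n| := abs_sub_pos.mpr (Nat.cast_injective.ne hmn)
  have h := (((kratzel_antitoneOn hτ).mono Ioi_subset_Ici_self).tendsto_setIntegral_pow_mul_div_pow
    (tendsto_kratzel_nhdsGT_zero hτ) k).div_const (Gamma m * Gamma n)
  simp only [hk, prodGammaCDF_eq_integral_pow_mul_kratzel hmn hk, div_right_comm _ (_ * _)]
  convert h using 2
  push_cast
  rw [div_div, mul_comm ((k : ℝ) + 1)]
end

section
/- Let P_out(γ) = ∏_{k=1}^K (c (2^R−1)/γ)^{N_T} ln(γ) / (N_T Γ(N_T)²) with all constants positive. Then lim_{γ→∞} −ln P_out(γ)/ln γ = K·N_T. -/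
open Filter Real Topology

theorem tendsto_log_log_div_log_atTop :
    Tendsto (fun x : ℝ => log (log x) / log x) atTop (𝓝 0) :=
  isLittleO_log_id_atTop.tendsto_div_nhds_zero.comp tendsto_log_atTop

/-- A single round contributes diversity `n`: the `log γ` factor is only a `log log γ` correction
to `-log`, negligible against `log γ`. -/
theorem tendsto_neg_log_div_log_pow_mul_log {B C : ℝ} (hB : B ≠ 0) (hC : C ≠ 0) (n : ℕ) :
    Tendsto (fun γ : ℝ => -log ((B / γ) ^ n * log γ / C) / log γ) atTop (𝓝 n) := by
  have hlim : Tendsto (fun γ : ℝ => n + (log C - n * log B) * (log γ)⁻¹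
      - log (log γ) / log γ) atTop (𝓝 n) := by
    simpa using ((tendsto_const_nhds (x := (n : ℝ))).add
      (tendsto_log_atTop.inv_tendsto_atTop.const_mul (log C - n * log B))).sub
      tendsto_log_log_div_log_atTop
  refine hlim.congr' ?_
  filter_upwards [eventually_gt_atTop 1] with γ hγ
  have hlogγ : log γ ≠ 0 := (log_pos hγ).ne'
  have hγ : γ ≠ 0 := by positivity
  rw [log_div (by positivity) hC, log_mul (by positivity) hlogγ, log_pow, log_div hB hγ]
  field_simp
  ring

theorem stmt_13_general (K NT : ℕ) (hNT : 0 < NT) (c R : ℝ) (hc : 0 < c) (hR : 0 < R) :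
    Filter.Tendsto
      (fun γ : ℝ =>
        -Real.log (∏ _k : Fin K,
            (c * ((2 : ℝ) ^ R - 1) / γ) ^ NT * Real.log γ / ((NT : ℝ) * Real.Gamma NT ^ 2)) /
          Real.log γ)
      Filter.atTop (nhds ((K : ℝ) * NT)) := by
  have hB : c * ((2 : ℝ) ^ R - 1) ≠ 0 :=
    mul_ne_zero hc.ne' (sub_pos.2 (one_lt_rpow (by norm_num) hR)).ne'
  have hC : (NT : ℝ) * Gamma NT ^ 2 ≠ 0 := by
    have := Gamma_pos_of_pos (Nat.cast_pos.2 hNT)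
    positivity
  refine ((tendsto_neg_log_div_log_pow_mul_log hB hC NT).const_mul (K : ℝ)).congr fun γ => ?_
  rw [Finset.prod_const, Finset.card_univ, Fintype.card_fin, log_pow]
  ring

theorem stmt_13 (K NT : ℕ) (hK : 0 < K) (hNT : 0 < NT) (c R : ℝ) (hc : 0 < c) (hR : 0 < R) :
    Filter.Tendsto
      (fun γ : ℝ =>
        -Real.log (∏ _k : Fin K,
            (c * ((2 : ℝ) ^ R - 1) / γ) ^ NT * Real.log γ / ((NT : ℝ) * Real.Gamma NT ^ 2)) /
          Real.log γ)
      Filter.atTop (nhds ((K : ℝ) * NT)) :=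
  stmt_13_general K NT hNT c R hc hR
end
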